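/- The largest eigenvalue μ of the Laplacian matrix of the graph K strictly exceeds max over all pairs of adjacent vertices v ~ j of (m_v + m_j)·(d_v·m_v + d_j·m_j)/(2·m_v·m_j). (This gives a counterexample to conjectured bound 65 of Brankov, Hansen and Stevanović.) -/

import Mathlib

/-- The edge list of the graph. -/
def edgeList : List (Fin 21 × Fin 21) :=
  [(0,3),(0,4),(0,5),(0,6),(0,7),(0,8),(0,9),(0,10),(0,11),(0,12),(0,13),(0,14),(0,15),(0,16),(0,17),(0,18),(0,19),(0,20),(1,2),(1,3),(2,7),(4,13),(5,6),(8,17),(9,18),(11,16),(14,19)]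

/-- The graph under consideration. -/
def G : SimpleGraph (Fin 21) where
  Adj v w := (v, w) ∈ edgeList ∨ (w, v) ∈ edgeList
  symm := ⟨fun _ _ h => h.symm⟩
  loopless := ⟨by intro v; fin_cases v <;> decide⟩

instance : DecidableRel G.Adj :=
  fun v w => inferInstanceAs (Decidable ((v, w) ∈ edgeList ∨ (w, v) ∈ edgeList))

/-- `d v` is the degree of the vertex `v`, as a real number. -/
noncomputable def d (v : Fin 21) : ℝ := G.degree v

/-- `m v` is the average of the degrees of the neighbours of `v`. -/
noncomputable def m (v : Fin 21) : ℝ :=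
  (∑ u ∈ G.neighborFinset v, (G.degree u : ℝ)) / d v

open Matrix

set_option maxHeartbeats 4000000

noncomputable def xv : Fin 21 → ℝ := ![18,0,0,-1,-1,-1,-1,-1,-1,-1,-1,-1,-1,-1,-1,-1,-1,-1,-1,-1,-1]

def degs : Fin 21 → ℕ := fun v => if v = 0 then 18 else if v = 10 ∨ v = 12 ∨ v = 15 ∨ v = 20 then 1 else 2

def sums : Fin 21 → ℕ := fun v => if v = 0 then 32 else if v = 1 ∨ v = 2 then 4 else if v = 10 ∨ v = 12 ∨ v = 15 ∨ v = 20 then 18 else 20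

lemma hdeg : ∀ v : Fin 21, G.degree v = degs v := by decide

lemma hsum : ∀ v : Fin 21, ∑ u ∈ G.neighborFinset v, G.degree u = sums v := by decide

lemma d_eq (v : Fin 21) : d v = (degs v : ℝ) := by rw [d, hdeg]

lemma m_eq (v : Fin 21) : m v = (sums v : ℝ) / (degs v : ℝ) := by
  rw [m, d, ← Nat.cast_sum, hsum, hdeg]

lemma quad_form : xv ⬝ᵥ (G.lapMatrix ℝ *ᵥ xv) = 6500 := by
  have h := SimpleGraph.lapMatrix_toLinearMap₂' (R := ℝ) (G := G) xv
  rw [Matrix.toLinearMap₂'_apply'] at h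
  rw [h]
  simp only [Fin.sum_univ_succ, Fin.sum_univ_zero]
  norm_num (config := { decide := true }) [xv, Matrix.cons_val_zero, Matrix.cons_val_succ, Matrix.cons_val, Matrix.cons_val_two, Matrix.vecHead, Matrix.vecTail]

lemma norm_form : xv ⬝ᵥ xv = 342 := by
  simp only [dotProduct, Fin.sum_univ_succ, Fin.sum_univ_zero]
  norm_num [xv, Matrix.cons_val_zero, Matrix.cons_val_succ, Matrix.cons_val, Matrix.cons_val_two, Matrix.vecHead, Matrix.vecTail]

theorem laplacian_spectral_radius_exceeds_bound (μ : ℝ)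
    (hmem : μ ∈ spectrum ℝ (G.lapMatrix ℝ))
    (hmax : ∀ ν ∈ spectrum ℝ (G.lapMatrix ℝ), ν ≤ μ) :
    (Finset.univ.filter fun p : _ × _ => G.Adj p.1 p.2).sup' (by decide)
      (fun p => (m p.1 + m p.2) * (d p.1 * m p.1 + d p.2 * m p.2) / (2 * m p.1 * m p.2)) < μ := by
  have hH : (G.lapMatrix ℝ).IsHermitian := (SimpleGraph.posSemidef_lapMatrix (R := ℝ) (G := G)).1
  have hsymm : (G.lapMatrix ℝ)ᵀ = G.lapMatrix ℝ := SimpleGraph.isSymm_lapMatrix (G := G) (R := ℝ)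
  have hM : (algebraMap ℝ (Matrix (Fin 21) (Fin 21) ℝ) μ - G.lapMatrix ℝ).IsHermitian := by
    simp [Matrix.IsHermitian, Matrix.conjTranspose_sub, hH.eq, Algebra.algebraMap_eq_smul_one,
      Matrix.conjTranspose_smul, hsymm]
  have hsd : (algebraMap ℝ (Matrix (Fin 21) (Fin 21) ℝ) μ - G.lapMatrix ℝ).PosSemidef := by
    apply hM.posSemidef_iff_eigenvalues_nonneg.mpr
    intro i
    have h1 := hM.eigenvalues_mem_spectrum_real i
    rw [← spectrum.singleton_sub_eq] at h1
    obtain ⟨p, hp, q, hq, hpq⟩ := Set.mem_sub.mp h1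
    rw [Set.mem_singleton_iff] at hp
    subst hp
    rw [← hpq]
    have := hmax q hq
    simp only [Pi.zero_apply]
    linarith
  have hq := hsd.dotProduct_mulVec_nonneg xv
  rw [star_trivial] at hq
  rw [Algebra.algebraMap_eq_smul_one, Matrix.sub_mulVec, Matrix.smul_mulVec,
    Matrix.one_mulVec, dotProduct_sub, dotProduct_smul, quad_form, norm_form] at hq
  have hmu : (3250 : ℝ) / 171 ≤ μ := by
    simp only [smul_eq_mul] at hq
    linarith
  rw [Finset.sup'_lt_iff]
  rintro ⟨a, b⟩ hp
  have hadj : G.Adj a b := (Finset.mem_filter.mp hp).2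
  have hh : (a, b) ∈ edgeList ∨ (b, a) ∈ edgeList := hadj
  simp only [edgeList, List.mem_cons, List.not_mem_nil, or_false, Prod.mk.injEq] at hh
  rcases hh with ((⟨rfl,rfl⟩|⟨rfl,rfl⟩|⟨rfl,rfl⟩|⟨rfl,rfl⟩|⟨rfl,rfl⟩|⟨rfl,rfl⟩|⟨rfl,rfl⟩|⟨rfl,rfl⟩|⟨rfl,rfl⟩|⟨rfl,rfl⟩|⟨rfl,rfl⟩|⟨rfl,rfl⟩|⟨rfl,rfl⟩|⟨rfl,rfl⟩|⟨rfl,rfl⟩|⟨rfl,rfl⟩|⟨rfl,rfl⟩|⟨rfl,rfl⟩|⟨rfl,rfl⟩|⟨rfl,rfl⟩|⟨rfl,rfl⟩|⟨rfl,rfl⟩|⟨rfl,rfl⟩|⟨rfl,rfl⟩|⟨rfl,rfl⟩|⟨rfl,rfl⟩|⟨rfl,rfl⟩)|(⟨rfl,rfl⟩|⟨rfl,rfl⟩|⟨rfl,rfl⟩|⟨rfl,rfl⟩|⟨rfl,rfl⟩|⟨rfl,rfl⟩|⟨rfl,rfl⟩|⟨rfl,rfl⟩|⟨rfl,rfl⟩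|⟨rfl,rfl⟩|⟨rfl,rfl⟩|⟨rfl,rfl⟩|⟨rfl,rfl⟩|⟨rfl,rfl⟩|⟨rfl,rfl⟩|⟨rfl,rfl⟩|⟨rfl,rfl⟩|⟨rfl,rfl⟩|⟨rfl,rfl⟩|⟨rfl,rfl⟩|⟨rfl,rfl⟩|⟨rfl,rfl⟩|⟨rfl,rfl⟩|⟨rfl,rfl⟩|⟨rfl,rfl⟩|⟨rfl,rfl⟩|⟨rfl,rfl⟩))
  all_goals
    rw [d_eq, d_eq, m_eq, m_eq]
    norm_num (config := { decide := true }) [degs, sums]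
    linarith
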